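/- Let α be a real number with α > 2, let S be a natural number with S ≥ 1, and let t > 0 be real. Then ∫₀^∞ (1 − (1 + t·y^(−α))^(−S))·y dy = (t^(2/α)/α)·Σ_{k=1}^{S} (S choose k)·Γ(k − 2/α)·Γ(S − k + 2/α)/Γ(S), where Γ is the real Gamma function. -/

import Mathlib

/-!
The substitution `u = t y^(-α)` turns the integral into `t^(2/α)/α` times
`∫₀^∞ u^(-2/α-1) (1 - (1+u)^(-S)) du`. Writing `1 - (1+u)^(-S) = ((1+u)^S - 1)(1+u)^(-S)` and
expanding `(1+u)^S - 1` binomially splits this into beta integrals of the second kind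
`∫₀^∞ u^(a-1) (1+u)^(-(a+b)) du = Γ(a)Γ(b)/Γ(a+b)` with `a = k - 2/α` and `b = S - k + 2/α`,
both positive because `α > 2`; the beta integral itself follows from the one on `[0,1]` by
`u = x/(1-x)`.
-/

open MeasureTheory Real Set

theorem add_pow_sub_one_eq_sum_Icc {R : Type*} [CommRing R] (u : R) (S : ℕ) :
    (1 + u) ^ S - 1 = ∑ k ∈ Finset.Icc 1 S, (S.choose k : R) * u ^ k := by
  rw [add_comm, add_pow, Finset.range_eq_Ico, Finset.sum_eq_sum_Ico_succ_bot (Nat.zero_lt_succ S)]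
  simp [mul_comm, Finset.Ico_add_one_right_eq_Icc]

theorem intervalIntegral_rpow_mul_one_sub_rpow {a b : ℝ} (ha : 0 < a) (hb : 0 < b) :
    ∫ x in (0 : ℝ)..1, x ^ (a - 1) * (1 - x) ^ (b - 1) = Gamma a * Gamma b / Gamma (a + b) := by
  have hbeta : Complex.betaIntegral a b
      = ↑(∫ x in (0 : ℝ)..1, x ^ (a - 1) * (1 - x) ^ (b - 1)) := by
    rw [Complex.betaIntegral, ← intervalIntegral.integral_ofReal]
    refine intervalIntegral.integral_congr fun x hx ↦ ?_
    rw [uIcc_of_le zero_le_one] at hx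
    push_cast
    rw [Complex.ofReal_cpow hx.1, Complex.ofReal_cpow (sub_nonneg.mpr hx.2)]
    push_cast
    ring_nf
  have := Complex.betaIntegral_eq_Gamma_mul_div a b (by simpa) (by simpa)
  rw [hbeta, ← Complex.ofReal_add, Complex.Gamma_ofReal, Complex.Gamma_ofReal,
    Complex.Gamma_ofReal] at this
  exact_mod_cast this

theorem image_div_one_sub_Ioo : (fun x : ℝ ↦ x / (1 - x)) '' Ioo 0 1 = Ioi 0 := by
  ext u
  constructor
  · rintro ⟨x, ⟨hx0, hx1⟩, rfl⟩
    exact div_pos hx0 (sub_pos.mpr hx1)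
  · intro (hu : 0 < u)
    refine ⟨u / (1 + u), ⟨by positivity, (div_lt_one (by positivity)).mpr (by linarith)⟩, ?_⟩
    field_simp
    ring

theorem integral_Ioi_rpow_mul_one_add_rpow_neg {a b : ℝ} (ha : 0 < a) (hb : 0 < b) :
    ∫ u in Ioi (0 : ℝ), u ^ (a - 1) * (1 + u) ^ (-(a + b)) = Gamma a * Gamma b / Gamma (a + b) := by
  have hderiv : ∀ x ∈ Ioo (0 : ℝ) 1,
      HasDerivWithinAt (fun x ↦ x / (1 - x)) ((1 - x) ^ (-2 : ℝ)) (Ioo 0 1) x := by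
    intro x ⟨_, hx1⟩
    have hne : 1 - x ≠ 0 := (sub_pos.mpr hx1).ne'
    refine (((hasDerivAt_id x).div ((hasDerivAt_id x).const_sub 1) hne).congr_deriv ?_)
      |>.hasDerivWithinAt
    rw [rpow_neg (sub_pos.mpr hx1).le, rpow_two, id]
    field_simp
    ring
  have hinj : InjOn (fun x : ℝ ↦ x / (1 - x)) (Ioo 0 1) := by
    intro x ⟨_, hx1⟩ y ⟨_, hy1⟩ hxy
    have : 1 - x ≠ 0 := (sub_pos.mpr hx1).ne'
    have : 1 - y ≠ 0 := (sub_pos.mpr hy1).ne'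
    field_simp at hxy
    linarith
  rw [← image_div_one_sub_Ioo,
    integral_image_eq_integral_abs_deriv_smul measurableSet_Ioo hderiv hinj,
    ← intervalIntegral_rpow_mul_one_sub_rpow ha hb, intervalIntegral.integral_of_le zero_le_one,
    integral_Ioc_eq_integral_Ioo]
  refine setIntegral_congr_fun measurableSet_Ioo fun x ⟨hx0, hx1⟩ ↦ ?_
  have hx1' : 0 < 1 - x := sub_pos.mpr hx1
  have hsum : 1 + x / (1 - x) = (1 - x)⁻¹ := by field_simp; ring
  rw [smul_eq_mul, abs_of_pos (rpow_pos_of_pos hx1' _), hsum, div_eq_mul_inv,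
    mul_rpow hx0.le (inv_nonneg.mpr hx1'.le), inv_rpow hx1'.le, inv_rpow hx1'.le,
    ← rpow_neg hx1'.le, ← rpow_neg hx1'.le]
  calc (1 - x) ^ (-2 : ℝ) * (x ^ (a - 1) * (1 - x) ^ (-(a - 1)) * (1 - x) ^ (-(-(a + b))))
      = x ^ (a - 1) * ((1 - x) ^ (-2 : ℝ) * (1 - x) ^ (-(a - 1)) * (1 - x) ^ (-(-(a + b)))) := by
        ring
    _ = x ^ (a - 1) * (1 - x) ^ (b - 1) := by
        rw [← rpow_add hx1', ← rpow_add hx1']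
        ring_nf

theorem integral_Ioi_rpow_mul_one_sub_one_add_rpow_neg {c : ℝ} (hc0 : 0 < c) (hc1 : c < 1)
    (S : ℕ) :
    ∫ u in Ioi (0 : ℝ), u ^ (-c - 1) * (1 - (1 + u) ^ (-(S : ℝ)))
      = ∑ k ∈ Finset.Icc 1 S, (S.choose k : ℝ) * Gamma (k - c) * Gamma (S - k + c) / Gamma S := by
  have hparams : ∀ k ∈ Finset.Icc 1 S, 0 < (k : ℝ) - c ∧ 0 < (S : ℝ) - k + c := by
    intro k hk
    obtain ⟨hk1, hkS⟩ := Finset.mem_Icc.mp hk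
    have : (1 : ℝ) ≤ k := by exact_mod_cast hk1
    have : (k : ℝ) ≤ S := by exact_mod_cast hkS
    constructor <;> linarith
  have hterm : ∀ k ∈ Finset.Icc 1 S,
      ∫ u in Ioi (0 : ℝ), u ^ ((k : ℝ) - c - 1) * (1 + u) ^ (-(S : ℝ))
        = Gamma (k - c) * Gamma (S - k + c) / Gamma S := by
    intro k hk
    have := integral_Ioi_rpow_mul_one_add_rpow_neg (hparams k hk).1 (hparams k hk).2
    rwa [show (k : ℝ) - c + (S - k + c) = S by ring] at this
  have hexpand : ∀ u ∈ Ioi (0 : ℝ), u ^ (-c - 1) * (1 - (1 + u) ^ (-(S : ℝ)))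
      = ∑ k ∈ Finset.Icc 1 S,
          (S.choose k : ℝ) * (u ^ ((k : ℝ) - c - 1) * (1 + u) ^ (-(S : ℝ))) := by
    intro u (hu : 0 < u)
    have hinv : (1 + u) ^ S * (1 + u) ^ (-(S : ℝ)) = 1 := by
      rw [← rpow_natCast, ← rpow_add (by positivity), add_neg_cancel, rpow_zero]
    calc u ^ (-c - 1) * (1 - (1 + u) ^ (-(S : ℝ)))
        = u ^ (-c - 1) * (((1 + u) ^ S - 1) * (1 + u) ^ (-(S : ℝ))) := by
          rw [sub_mul, hinv, one_mul]
      _ = _ := by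
          rw [add_pow_sub_one_eq_sum_Icc, Finset.sum_mul, Finset.mul_sum]
          refine Finset.sum_congr rfl fun k _ ↦ ?_
          rw [show u ^ ((k : ℝ) - c - 1) = u ^ (-c - 1) * u ^ k by
            rw [← rpow_natCast, ← rpow_add hu]; ring_nf]
          ring
  rw [setIntegral_congr_fun measurableSet_Ioi hexpand, integral_finsetSum]
  · refine Finset.sum_congr rfl fun k hk ↦ ?_
    rw [integral_const_mul, hterm k hk]
    ring
  · -- a non-integrable function has Bochner integral `0`, and these integrals are positive
    intro k hk
    refine (Integrable.of_integral_ne_zero ?_).const_mul _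
    obtain ⟨ha, hb⟩ := hparams k hk
    rw [hterm k hk]
    exact (div_pos (mul_pos (Gamma_pos_of_pos ha) (Gamma_pos_of_pos hb))
      (Gamma_pos_of_pos (by linarith))).ne'

section ChangeOfVariables

variable {E : Type*} [NormedAddCommGroup E] [NormedSpace ℝ E]

theorem integral_Ioi_rpow_smul_comp_mul_left (f : ℝ → E) {t : ℝ} (ht : 0 < t) (q : ℝ) :
    ∫ x in Ioi (0 : ℝ), x ^ q • f (t * x) = t ^ (-q - 1) • ∫ x in Ioi (0 : ℝ), x ^ q • f x := by
  have hscale := integral_comp_mul_left_Ioi (fun x ↦ x ^ q • f x) 0 ht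
  rw [mul_zero] at hscale
  calc ∫ x in Ioi (0 : ℝ), x ^ q • f (t * x)
      = t ^ (-q) • ∫ x in Ioi (0 : ℝ), (t * x) ^ q • f (t * x) := by
        rw [← integral_smul]
        refine setIntegral_congr_fun measurableSet_Ioi fun x (hx : 0 < x) ↦ ?_
        rw [smul_smul, mul_rpow ht.le hx.le, ← mul_assoc, ← rpow_add ht, neg_add_cancel,
          rpow_zero, one_mul]
    _ = t ^ (-q - 1) • ∫ x in Ioi (0 : ℝ), x ^ q • f x := by
        rw [hscale, smul_smul, ← rpow_neg_one, ← rpow_add ht, sub_eq_add_neg]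

theorem integral_Ioi_rpow_smul_comp_rpow_neg (f : ℝ → E) {α : ℝ} (hα : 0 < α) (s : ℝ) :
    ∫ y in Ioi (0 : ℝ), y ^ (s - 1) • f (y ^ (-α))
      = α⁻¹ • ∫ u in Ioi (0 : ℝ), u ^ (-(s / α) - 1) • f u := by
  rw [← integral_comp_rpow_Ioi (fun u ↦ u ^ (-(s / α) - 1) • f u) (neg_ne_zero.mpr hα.ne'),
    ← integral_smul]
  refine setIntegral_congr_fun measurableSet_Ioi fun y (hy : 0 < y) ↦ ?_
  rw [smul_smul, smul_smul, abs_neg, abs_of_pos hα, ← rpow_mul hy.le, ← mul_assoc,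
    inv_mul_cancel₀ hα.ne', one_mul, ← rpow_add hy]
  congr 2
  field_simp
  ring

theorem integral_Ioi_rpow_smul_comp_mul_rpow_neg (f : ℝ → E) {α t : ℝ} (hα : 0 < α) (ht : 0 < t)
    (s : ℝ) :
    ∫ y in Ioi (0 : ℝ), y ^ (s - 1) • f (t * y ^ (-α))
      = (t ^ (s / α) / α) • ∫ u in Ioi (0 : ℝ), u ^ (-(s / α) - 1) • f u := by
  rw [integral_Ioi_rpow_smul_comp_rpow_neg (fun u ↦ f (t * u)) hα,
    integral_Ioi_rpow_smul_comp_mul_left f ht, smul_smul, div_eq_inv_mul]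
  ring_nf

end ChangeOfVariables

theorem gamma_interference_exponent_integral_general
    (α : ℝ) (hα : 2 < α) (S : ℕ) (t : ℝ) (ht : 0 < t) :
    ∫ y in Set.Ioi (0 : ℝ), (1 - (1 + t * y ^ (-α)) ^ (-(S : ℝ))) * y
      = (t ^ (2 / α) / α) *
          ∑ k ∈ Finset.Icc 1 S,
            (S.choose k : ℝ) * Real.Gamma (k - 2 / α) *
              Real.Gamma (S - k + 2 / α) / Real.Gamma S := by
  have hα0 : 0 < α := by linarith
  calc ∫ y in Ioi (0 : ℝ), (1 - (1 + t * y ^ (-α)) ^ (-(S : ℝ))) * y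
      = ∫ y in Ioi (0 : ℝ), y ^ ((2 : ℝ) - 1) • (1 - (1 + t * y ^ (-α)) ^ (-(S : ℝ))) := by
        norm_num [mul_comm]
    _ = (t ^ (2 / α) / α) * ∫ u in Ioi (0 : ℝ), u ^ (-(2 / α) - 1) * (1 - (1 + u) ^ (-(S : ℝ))) :=
        integral_Ioi_rpow_smul_comp_mul_rpow_neg (fun u ↦ 1 - (1 + u) ^ (-(S : ℝ))) hα0 ht 2
    _ = _ := by
        rw [integral_Ioi_rpow_mul_one_sub_one_add_rpow_neg (by positivity)
          ((div_lt_one hα0).mpr hα)]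

theorem gamma_interference_exponent_integral
    (α : ℝ) (hα : 2 < α) (S : ℕ) (hS : 1 ≤ S) (t : ℝ) (ht : 0 < t) :
    ∫ y in Set.Ioi (0 : ℝ), (1 - (1 + t * y ^ (-α)) ^ (-(S : ℝ))) * y
      = (t ^ (2 / α) / α) *
          ∑ k ∈ Finset.Icc 1 S,
            (S.choose k : ℝ) * Real.Gamma (k - 2 / α) *
              Real.Gamma (S - k + 2 / α) / Real.Gamma S :=
  gamma_interference_exponent_integral_general α hα S t ht
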